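/- With notation as in the mollified Haar function construction (f_{Q,l} = h_Q * d_{j+l} for Q ∈ 𝒬_j), for l ≤ 0 there is a constant C (depending on n and b) such that: ∫ f_{Q,l} = 0, supp f_{Q,l} ⊆ C·2^{|l|}Q, |f_{Q,l}| ≤ C·2^{−|l|(n+1)}, and Lip(f_{Q,l}) ≤ C·2^{−|l|(n+2)}/diam(Q). -/

import Mathlib

open MeasureTheory

/-- The dyadic interval `[2^(-j) k, 2^(-j)(k+1))`. -/
noncomputable def dyI (j k : ℤ) : Set ℝ :=
  Set.Ico ((2:ℝ) ^ (-j) * k) ((2:ℝ) ^ (-j) * (k + 1))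

/-- The dyadic cube in `ℝⁿ` with sidelength `2^(-j)` and position `k : Fin n → ℤ`. -/
noncomputable def cubeSet (n : ℕ) (j : ℤ) (k : Fin n → ℤ) : Set (Fin n → ℝ) :=
  {x | ∀ i, x i ∈ dyI j (k i)}

/-- The `L^∞`-normalized Haar function on `[0,1)`. -/
noncomputable def haar1 (t : ℝ) : ℝ :=
  if 0 ≤ t ∧ t < 1 / 2 then 1 else if 1 / 2 ≤ t ∧ t < 1 then -1 else 0

/-- The `L^∞`-normalized Haar function on the dyadic interval `[2^(-j)k, 2^(-j)(k+1))`. -/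
noncomputable def haarI (j k : ℤ) (t : ℝ) : ℝ :=
  haar1 ((t - (2:ℝ) ^ (-j) * k) * (2:ℝ) ^ j)

/-- The indicator of the dyadic interval `[2^(-j)k, 2^(-j)(k+1))`. -/
noncomputable def indI (j k : ℤ) (t : ℝ) : ℝ := (dyI j k).indicator 1 t

/-- The directional Haar function `h_Q^{(ε)}` on the dyadic cube `Q = Q(j,k) ⊂ ℝⁿ`,
`ε ∈ {0,1}ⁿ` (encoded by `ε : Fin n → Bool`). -/
noncomputable def haarCube (n : ℕ) (j : ℤ) (k : Fin n → ℤ) (ε : Fin n → Bool)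
    (x : Fin n → ℝ) : ℝ :=
  ∏ i, if ε i then haarI j (k i) (x i) else indI j (k i) (x i)

/-- The set of discontinuities `D(Q)` of the Haar function `h_Q^{(ε)}`. -/
noncomputable def discSet (n : ℕ) (j : ℤ) (k : Fin n → ℤ) (ε : Fin n → Bool) :
    Set (Fin n → ℝ) :=
  {x | ¬ ContinuousAt (haarCube n j k ε) x}

/-- The mollifier difference `d(x) = 2ⁿ b(2x) - b(x)`. -/
noncomputable def mollD (n : ℕ) (b : (Fin n → ℝ) → ℝ) (x : Fin n → ℝ) : ℝ :=
  2 ^ n * b (fun i => 2 * x i) - b x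

/-- The rescaled mollifier `d_m(x) = 2^{mn} d(2^m x)`. -/
noncomputable def mollDl (n : ℕ) (b : (Fin n → ℝ) → ℝ) (m : ℤ) (x : Fin n → ℝ) : ℝ :=
  (2:ℝ) ^ (m * (n:ℤ)) * mollD n b (fun i => (2:ℝ) ^ m * x i)

/-- The mollified Haar function `f_{Q,l} = h_Q^{(ε)} * d_{j+l}` for `Q ∈ 𝒬_j`. -/
noncomputable def mollHaar (n : ℕ) (b : (Fin n → ℝ) → ℝ) (j : ℤ) (k : Fin n → ℤ)
    (ε : Fin n → Bool) (l : ℤ) (x : Fin n → ℝ) : ℝ :=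
  ∫ y, haarCube n j k ε y * mollDl n b (j + l) (x - y)

/-- The center of the dyadic cube `Q(j,k)`. -/
noncomputable def cubeCenter (n : ℕ) (j : ℤ) (k : Fin n → ℤ) : Fin n → ℝ :=
  fun i => (2:ℝ) ^ (-j) * k i + (2:ℝ) ^ (-j) / 2

section Aux1
open Classical

lemma measurable_haar1 : Measurable haar1 := by
  unfold haar1
  exact Measurable.ite (measurableSet_Ico (a := (0:ℝ)) (b := 1/2)) measurable_const
    (Measurable.ite (measurableSet_Ico (a := (1/2:ℝ)) (b := 1)) measurable_const measurable_const)

lemma abs_haar1_le (t : ℝ) : |haar1 t| ≤ 1 := by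
  unfold haar1; split_ifs <;> norm_num

lemma haar1_eq_zero {t : ℝ} (h : t ∉ Set.Ico (0:ℝ) 1) : haar1 t = 0 := by
  rw [Set.mem_Ico] at h; push_neg at h
  unfold haar1
  split_ifs with h1 h2
  · rcases h1 with ⟨h1a, h1b⟩; have := h h1a; linarith
  · rcases h2 with ⟨h2a, h2b⟩; have := h (by linarith); linarith
  · rfl

lemma measurable_indI (j k : ℤ) : Measurable (indI j k) := by
  unfold indI dyI
  exact (measurable_const.indicator measurableSet_Ico)

lemma measurable_haarI (j k : ℤ) : Measurable (haarI j k) := by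
  unfold haarI
  exact measurable_haar1.comp (by fun_prop)

lemma abs_indI_le (j k : ℤ) (t : ℝ) : |indI j k t| ≤ 1 := by
  unfold indI
  rw [Set.indicator_apply]; split_ifs <;> norm_num

lemma indI_eq_zero {j k : ℤ} {t : ℝ} (h : t ∉ dyI j k) : indI j k t = 0 :=
  Set.indicator_of_notMem h _

lemma mem_dyI_iff {j k : ℤ} {t : ℝ} :
    t ∈ dyI j k ↔ 0 ≤ (t - (2:ℝ)^(-j) * k) * (2:ℝ)^j ∧ (t - (2:ℝ)^(-j) * k) * (2:ℝ)^j < 1 := by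
  have h2 : (0:ℝ) < (2:ℝ)^j := zpow_pos (by norm_num) j
  have key : (2:ℝ)^(-j) * (2:ℝ)^j = 1 := by
    rw [← zpow_add₀ (by norm_num : (2:ℝ) ≠ 0)]; simp
  unfold dyI
  rw [Set.mem_Ico]
  constructor
  · rintro ⟨h1, h1'⟩
    constructor
    · nlinarith
    · nlinarith
  · rintro ⟨h1, h1'⟩
    constructor
    · nlinarith
    · nlinarith

lemma haarI_eq_zero {j k : ℤ} {t : ℝ} (h : t ∉ dyI j k) : haarI j k t = 0 := by
  unfold haarI
  apply haar1_eq_zero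
  intro hc
  exact h (mem_dyI_iff.2 (Set.mem_Ico.1 hc))

lemma abs_haarI_le (j k : ℤ) (t : ℝ) : |haarI j k t| ≤ 1 := abs_haar1_le _

lemma dyI_subset (j k : ℤ) : dyI (j+1) (2*k) ⊆ dyI j k := by
  intro t ht
  have h2 : (0:ℝ) < (2:ℝ)^(-j-1) := zpow_pos (by norm_num) _
  have e1 : (2:ℝ)^(-(j+1)) = (2:ℝ)^(-j) / 2 := by
    rw [show -(j+1) = -j + (-1) by ring, zpow_add₀ (by norm_num : (2:ℝ) ≠ 0), zpow_neg_one]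
    ring
  unfold dyI at *
  rw [Set.mem_Ico] at *
  push_cast at ht ⊢
  rw [e1] at ht
  have h3 : (0:ℝ) < (2:ℝ)^(-j) := zpow_pos (by norm_num) _
  constructor
  · nlinarith [ht.1]
  · nlinarith [ht.2]

lemma haarI_eq_sub (j k : ℤ) (t : ℝ) :
    haarI j k t = indI (j+1) (2*k) t - indI (j+1) (2*k) (t - (2:ℝ)^(-(j+1))) := by
  have hu : (2:ℝ)^j ≠ 0 := by positivity
  have e0 : (2:ℝ)^(-j) = ((2:ℝ)^j)⁻¹ := by rw [zpow_neg]
  have e2 : (2:ℝ)^(j+1) = 2 * (2:ℝ)^j := by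
    rw [zpow_add₀ (by norm_num : (2:ℝ) ≠ 0)]; ring
  have e3 : (2:ℝ)^(-(j+1)) = (2 * (2:ℝ)^j)⁻¹ := by rw [zpow_neg, e2]
  set s : ℝ := (t - (2:ℝ)^(-j) * k) * (2:ℝ)^j with hs
  have key1 : (t - (2:ℝ)^(-(j+1)) * ((2*k : ℤ) : ℝ)) * (2:ℝ)^(j+1) = 2 * s := by
    rw [hs, e3, e2, e0]; push_cast; field_simp
  have key2 : (t - (2:ℝ)^(-(j+1)) - (2:ℝ)^(-(j+1)) * ((2*k : ℤ) : ℝ)) * (2:ℝ)^(j+1)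
      = 2 * s - 1 := by
    rw [hs, e3, e2, e0]; push_cast; field_simp; ring
  have m1 : t ∈ dyI (j+1) (2*k) ↔ (0 ≤ 2*s ∧ 2*s < 1) := by
    rw [mem_dyI_iff, key1]
  have m2 : (t - (2:ℝ)^(-(j+1))) ∈ dyI (j+1) (2*k) ↔ (0 ≤ 2*s - 1 ∧ 2*s - 1 < 1) := by
    rw [mem_dyI_iff, key2]
  unfold haarI haar1 indI
  rw [← hs, Set.indicator_apply, Set.indicator_apply]
  simp only [m1, m2, Pi.one_apply]
  by_cases hA : 0 ≤ s ∧ s < 1/2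
  · have hP : 0 ≤ 2*s ∧ 2*s < 1 := ⟨by linarith [hA.1], by linarith [hA.2]⟩
    have hQn : ¬(0 ≤ 2*s - 1 ∧ 2*s - 1 < 1) := fun h => by linarith [hA.2, h.1]
    rw [if_pos hA, if_pos hP, if_neg hQn]; norm_num
  · by_cases hB : 1/2 ≤ s ∧ s < 1
    · have hPn : ¬(0 ≤ 2*s ∧ 2*s < 1) := fun h => by linarith [hB.1, h.2]
      have hQ : 0 ≤ 2*s - 1 ∧ 2*s - 1 < 1 := ⟨by linarith [hB.1], by linarith [hB.2]⟩
      rw [if_neg hA, if_pos hB, if_neg hPn, if_pos hQ]; norm_num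
    · push_neg at hA hB
      rcases le_or_gt 0 s with hs0 | hs0
      · have h1 : 1 ≤ s := hB (hA hs0)
        have hPn : ¬(0 ≤ 2*s ∧ 2*s < 1) := fun h => by linarith [h.2]
        have hQn : ¬(0 ≤ 2*s - 1 ∧ 2*s - 1 < 1) := fun h => by linarith [h.2]
        rw [if_neg (fun h => by linarith [(h : 0 ≤ s ∧ s < 1/2).2] : ¬(0 ≤ s ∧ s < 1/2)),
          if_neg (fun h => by linarith [(h : 1/2 ≤ s ∧ s < 1).2] : ¬(1/2 ≤ s ∧ s < 1)),
          if_neg hPn, if_neg hQn]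
        norm_num
      · have hPn : ¬(0 ≤ 2*s ∧ 2*s < 1) := fun h => by linarith [h.1]
        have hQn : ¬(0 ≤ 2*s - 1 ∧ 2*s - 1 < 1) := fun h => by linarith [h.1]
        rw [if_neg (fun h => by linarith [(h : 0 ≤ s ∧ s < 1/2).1] : ¬(0 ≤ s ∧ s < 1/2)),
          if_neg (fun h => by linarith [(h : 1/2 ≤ s ∧ s < 1).1] : ¬(1/2 ≤ s ∧ s < 1)),
          if_neg hPn, if_neg hQn]
        norm_num

end Aux1
section Aux2
open Classical

/-- Auxiliary half-cube product function. -/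
noncomputable def gAux (n : ℕ) (j : ℤ) (k : Fin n → ℤ) (ε : Fin n → Bool) (i₀ : Fin n)
    (z : Fin n → ℝ) : ℝ :=
  ∏ i, if i = i₀ then indI (j+1) (2 * k i₀) (z i)
    else if ε i then haarI j (k i) (z i) else indI j (k i) (z i)

lemma measurable_haarCube (n : ℕ) (j : ℤ) (k : Fin n → ℤ) (ε : Fin n → Bool) :
    Measurable (haarCube n j k ε) := by
  unfold haarCube
  apply Finset.measurable_prod
  intro i _
  cases hε : ε i <;> simp only [hε, if_true, if_false, Bool.false_eq_true]
  · exact (measurable_indI j (k i)).comp (measurable_pi_apply i)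
  · exact (measurable_haarI j (k i)).comp (measurable_pi_apply i)

lemma measurable_gAux (n : ℕ) (j : ℤ) (k : Fin n → ℤ) (ε : Fin n → Bool) (i₀ : Fin n) :
    Measurable (gAux n j k ε i₀) := by
  unfold gAux
  apply Finset.measurable_prod
  intro i _
  by_cases hi : i = i₀
  · subst hi
    simp only [if_pos rfl]
    exact (measurable_indI _ _).comp (measurable_pi_apply i)
  · simp only [if_neg hi]
    cases hε : ε i <;> simp only [hε, if_true, if_false, Bool.false_eq_true]
    · exact (measurable_indI j (k i)).comp (measurable_pi_apply i)
    · exact (measurable_haarI j (k i)).comp (measurable_pi_apply i)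

lemma abs_haarCube_le (n : ℕ) (j : ℤ) (k : Fin n → ℤ) (ε : Fin n → Bool) (x : Fin n → ℝ) :
    |haarCube n j k ε x| ≤ (cubeSet n j k).indicator 1 x := by
  by_cases hx : x ∈ cubeSet n j k
  · rw [Set.indicator_of_mem hx, Pi.one_apply]
    unfold haarCube
    rw [Finset.abs_prod]
    apply Finset.prod_le_one (fun i _ => abs_nonneg _)
    intro i _
    split_ifs
    · exact abs_haarI_le _ _ _
    · exact abs_indI_le _ _ _
  · rw [Set.indicator_of_notMem hx]
    have hex : ∃ i, x i ∉ dyI j (k i) := by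
      by_contra hc
      push_neg at hc
      exact hx hc
    obtain ⟨i, hi⟩ := hex
    apply le_of_eq
    rw [abs_eq_zero]
    unfold haarCube
    apply Finset.prod_eq_zero (Finset.mem_univ i)
    split_ifs
    · exact haarI_eq_zero hi
    · exact indI_eq_zero hi

lemma abs_gAux_le (n : ℕ) (j : ℤ) (k : Fin n → ℤ) (ε : Fin n → Bool) (i₀ : Fin n)
    (x : Fin n → ℝ) :
    |gAux n j k ε i₀ x| ≤ (cubeSet n j k).indicator 1 x := by
  by_cases hx : x ∈ cubeSet n j k
  · rw [Set.indicator_of_mem hx, Pi.one_apply]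
    unfold gAux
    rw [Finset.abs_prod]
    apply Finset.prod_le_one (fun i _ => abs_nonneg _)
    intro i _
    split_ifs
    · exact abs_indI_le _ _ _
    · exact abs_haarI_le _ _ _
    · exact abs_indI_le _ _ _
  · rw [Set.indicator_of_notMem hx]
    have hex : ∃ i, x i ∉ dyI j (k i) := by
      by_contra hc
      push_neg at hc
      exact hx hc
    obtain ⟨i, hi⟩ := hex
    apply le_of_eq
    rw [abs_eq_zero]
    unfold gAux
    apply Finset.prod_eq_zero (Finset.mem_univ i)
    by_cases hii : i = i₀
    · subst hii
      rw [if_pos rfl]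
      exact indI_eq_zero (fun hmem => hi (dyI_subset j (k i) hmem))
    · rw [if_neg hii]
      split_ifs
      · exact haarI_eq_zero hi
      · exact indI_eq_zero hi

lemma haarCube_decomp (n : ℕ) (j : ℤ) (k : Fin n → ℤ) (ε : Fin n → Bool) (i₀ : Fin n)
    (hi : ε i₀ = true) (z : Fin n → ℝ) :
    haarCube n j k ε z = gAux n j k ε i₀ z
      - gAux n j k ε i₀ (z - Pi.single i₀ ((2:ℝ)^(-(j+1)))) := by
  classical
  set c : ℝ := (2:ℝ)^(-(j+1))
  have hzi : ∀ i, i ≠ i₀ → (z - (Pi.single i₀ c : Fin n → ℝ)) i = z i := by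
    intro i hne
    simp [Pi.sub_apply, Pi.single_eq_of_ne hne]
  have hzi0 : (z - (Pi.single i₀ c : Fin n → ℝ)) i₀ = z i₀ - c := by
    simp [Pi.sub_apply]
  unfold haarCube gAux
  rw [← Finset.mul_prod_erase Finset.univ _ (Finset.mem_univ i₀),
      ← Finset.mul_prod_erase Finset.univ _ (Finset.mem_univ i₀),
      ← Finset.mul_prod_erase Finset.univ _ (Finset.mem_univ i₀)]
  have hP : ∀ (w : Fin n → ℝ), (∀ i, i ≠ i₀ → w i = z i) →
      (∏ i ∈ Finset.univ.erase i₀, (if i = i₀ then indI (j+1) (2 * k i₀) (w i)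
        else if ε i then haarI j (k i) (w i) else indI j (k i) (w i)))
      = ∏ i ∈ Finset.univ.erase i₀, (if ε i then haarI j (k i) (z i) else indI j (k i) (z i)) := by
    intro w hw
    apply Finset.prod_congr rfl
    intro i hi'
    have hne : i ≠ i₀ := Finset.ne_of_mem_erase hi'
    rw [if_neg hne, hw i hne]
  rw [hP z (fun _ _ => rfl), hP _ hzi, if_pos rfl, if_pos rfl, hi, if_pos rfl,
    hzi0, haarI_eq_sub, sub_mul]

lemma cubeSet_eq (n : ℕ) (j : ℤ) (k : Fin n → ℤ) :
    cubeSet n j k = Set.univ.pi (fun i => dyI j (k i)) := by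
  ext x; simp [cubeSet, Set.mem_pi]

lemma measurableSet_cubeSet (n : ℕ) (j : ℤ) (k : Fin n → ℤ) :
    MeasurableSet (cubeSet n j k) := by
  rw [cubeSet_eq]
  exact MeasurableSet.univ_pi (fun i => measurableSet_Ico)

lemma volume_dyI (j k : ℤ) : volume (dyI j k) = ENNReal.ofReal ((2:ℝ)^(-j)) := by
  unfold dyI
  rw [Real.volume_Ico]
  congr 1; ring

lemma volume_cubeSet (n : ℕ) (j : ℤ) (k : Fin n → ℤ) :
    volume (cubeSet n j k) = ENNReal.ofReal ((2:ℝ)^(-j * (n:ℤ))) := by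
  rw [cubeSet_eq, volume_pi_pi]
  simp only [volume_dyI]
  rw [Finset.prod_const, ← ENNReal.ofReal_pow (by positivity), Finset.card_univ, Fintype.card_fin,
    ← zpow_natCast ((2:ℝ)^(-j)), ← zpow_mul]

end Aux2
section Aux3

lemma integrable_of_le_indicator {α : Type*} [MeasurableSpace α] {μ : Measure α}
    {F : α → ℝ} {s : Set α} {c : ℝ}
    (hF : AEStronglyMeasurable F μ) (hs : MeasurableSet s) (hv : μ s ≠ ⊤)
    (hb : ∀ z, ‖F z‖ ≤ s.indicator (fun _ => c) z) : Integrable F μ :=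
  Integrable.mono' ((integrable_indicator_iff hs).2 (integrableOn_const hv))
    hF (Filter.Eventually.of_forall hb)

lemma double_diff {E : Type*} [NormedAddCommGroup E] [NormedSpace ℝ E]
    (φ : E → ℝ) (hφ : Differentiable ℝ φ) {K : NNReal}
    (hK : LipschitzWith K (fderiv ℝ φ)) (u v h : E) :
    |φ u - φ (u - h) - (φ v - φ (v - h))| ≤ K * ‖h‖ * ‖u - v‖ := by
  have hg : ∀ w : E, HasFDerivAt (fun w => φ w - φ (w - h))
      (fderiv ℝ φ w - fderiv ℝ φ (w - h)) w := by
    intro w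
    have h1 := (hφ w).hasFDerivAt
    have h2 : HasFDerivAt (fun w => φ (w - h)) (fderiv ℝ φ (w - h)) w := by
      have := (hφ (w - h)).hasFDerivAt.comp w ((hasFDerivAt_id w).sub_const h)
      exact this
    exact h1.sub h2
  have bound : ∀ w ∈ (Set.univ : Set E), ‖fderiv ℝ φ w - fderiv ℝ φ (w - h)‖ ≤ K * ‖h‖ := by
    intro w _
    have h3 := hK.dist_le_mul w (w - h)
    rw [dist_eq_norm, dist_eq_norm, sub_sub_cancel] at h3
    exact h3
  have := convex_univ.norm_image_sub_le_of_norm_hasFDerivWithin_le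
    (fun w _ => (hg w).hasFDerivWithinAt) bound (Set.mem_univ v) (Set.mem_univ u)
  rw [Real.norm_eq_abs] at this
  exact this

lemma cubeSet_subset_ball (n : ℕ) (j : ℤ) (k : Fin n → ℤ) {z : Fin n → ℝ}
    (hz : z ∈ cubeSet n j k) : dist z (cubeCenter n j k) ≤ (2:ℝ)^(-j) := by
  have h0 : (0:ℝ) ≤ (2:ℝ)^(-j) := by positivity
  rw [dist_pi_le_iff h0]
  intro i
  have hi := hz i
  unfold dyI at hi
  rw [Set.mem_Ico] at hi
  rw [Real.dist_eq]
  unfold cubeCenter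
  rw [abs_le]
  have : (2:ℝ)^(-j) * ((k i : ℝ) + 1) = (2:ℝ)^(-j) * k i + (2:ℝ)^(-j) := by ring
  constructor <;> nlinarith [hi.1, hi.2]

lemma diam_cubeSet_le (n : ℕ) (j : ℤ) (k : Fin n → ℤ) :
    Metric.diam (cubeSet n j k) ≤ (2:ℝ)^(-j) := by
  apply Metric.diam_le_of_forall_dist_le (by positivity)
  intro x hx y hy
  have h0 : (0:ℝ) ≤ (2:ℝ)^(-j) := by positivity
  rw [dist_pi_le_iff h0]
  intro i
  have hxi := hx i
  have hyi := hy i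
  unfold dyI at hxi hyi
  rw [Set.mem_Ico] at hxi hyi
  rw [Real.dist_eq, abs_le]
  have : (2:ℝ)^(-j) * ((k i : ℝ) + 1) = (2:ℝ)^(-j) * k i + (2:ℝ)^(-j) := by ring
  constructor <;> nlinarith [hxi.1, hxi.2, hyi.1, hyi.2]

lemma diam_cubeSet_pos (n : ℕ) (hn : 1 ≤ n) (j : ℤ) (k : Fin n → ℤ) :
    0 < Metric.diam (cubeSet n j k) := by
  have h0 : (0:ℝ) < (2:ℝ)^(-j) := by positivity
  have hpmem : (fun i => (2:ℝ)^(-j) * k i) ∈ cubeSet n j k := by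
    intro i
    unfold dyI
    rw [Set.mem_Ico]
    refine ⟨le_refl _, ?_⟩
    show (2:ℝ)^(-j) * (k i : ℝ) < (2:ℝ)^(-j) * ((k i : ℝ) + 1)
    nlinarith
  have hcmem : cubeCenter n j k ∈ cubeSet n j k := by
    intro i
    unfold dyI cubeCenter
    rw [Set.mem_Ico]
    constructor
    · nlinarith
    · nlinarith
  have hbdd : Bornology.IsBounded (cubeSet n j k) := by
    apply (Metric.isBounded_closedBall (x := cubeCenter n j k) (r := (2:ℝ)^(-j))).subset
    intro z hz
    exact Metric.mem_closedBall.2 (cubeSet_subset_ball n j k hz)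
  have hle := Metric.dist_le_diam_of_mem hbdd hpmem hcmem
  have i0 : Fin n := ⟨0, hn⟩
  have hdist : dist ((2:ℝ)^(-j) * (k i0 : ℝ)) (cubeCenter n j k i0)
      ≤ dist (fun i => (2:ℝ)^(-j) * (k i : ℝ)) (cubeCenter n j k) :=
    dist_le_pi_dist (fun i => (2:ℝ)^(-j) * (k i : ℝ)) (cubeCenter n j k) i0
  have heq : dist ((2:ℝ)^(-j) * (k i0 : ℝ)) (cubeCenter n j k i0) = (2:ℝ)^(-j)/2 := by
    unfold cubeCenter
    rw [Real.dist_eq]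
    have h1 : (2:ℝ)^(-j) * (k i0:ℝ) - ((2:ℝ)^(-j) * k i0 + (2:ℝ)^(-j)/2)
        = -((2:ℝ)^(-j)/2) := by ring
    rw [h1, abs_neg, abs_of_nonneg (by positivity)]
  linarith

end Aux3
section Aux4

variable {n : ℕ} {b : (Fin n → ℝ) → ℝ}

lemma fun_two_smul (c : ℝ) (x : Fin n → ℝ) : (fun i => c * x i) = c • x := rfl

lemma mollD_contDiff (hsm : ContDiff ℝ (⊤ : ℕ∞) b) : ContDiff ℝ (⊤ : ℕ∞) (mollD n b) := by
  unfold mollD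
  apply ContDiff.sub _ hsm
  apply ContDiff.mul contDiff_const
  have : (fun x : Fin n → ℝ => b (fun i => 2 * x i)) = b ∘ (fun x => (2:ℝ) • x) := by
    funext x; rfl
  rw [this]
  exact hsm.comp (contDiff_id.const_smul (2:ℝ))

lemma mollD_hasCompactSupport (hcs : HasCompactSupport b) :
    HasCompactSupport (mollD n b) := by
  have h2cs : HasCompactSupport (fun x : Fin n → ℝ => b ((2:ℝ) • x)) :=
    hcs.comp_isClosedEmbedding (Homeomorph.smulOfNeZero (2:ℝ) two_ne_zero).isClosedEmbedding
  have h1 : HasCompactSupport (fun x : Fin n → ℝ => (2:ℝ)^n * b ((2:ℝ) • x)) :=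
    h2cs.mul_left
  have h2 := h1.add hcs.neg
  have heq : mollD n b = (fun x : Fin n → ℝ => (2:ℝ)^n * b ((2:ℝ) • x)) + (-b) := by
    funext x
    rw [Pi.add_apply, Pi.neg_apply]
    show (2:ℝ)^n * b (fun i => 2 * x i) - b x = _
    rw [sub_eq_add_neg]
    rfl
  rw [heq]
  exact h2

lemma mollD_supp (hsupp : Function.support b ⊆ Set.univ.pi fun _ : Fin n => Set.Ioo (0:ℝ) 1)
    {x : Fin n → ℝ} (hx : mollD n b x ≠ 0) : ‖x‖ ≤ 1 := by
  have key : ∀ y : Fin n → ℝ, b y ≠ 0 → ∀ i, 0 < y i ∧ y i < 1 := by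
    intro y hy i
    have := hsupp (Function.mem_support.2 hy)
    rw [Set.mem_univ_pi] at this
    exact ⟨(this i).1, (this i).2⟩
  rw [pi_norm_le_iff_of_nonneg (by norm_num : (0:ℝ) ≤ 1)]
  intro i
  unfold mollD at hx
  by_cases h1 : b (fun i => 2 * x i) ≠ 0
  · have := key _ h1 i
    rw [Real.norm_eq_abs, abs_le]
    constructor <;> nlinarith [this.1, this.2]
  · push_neg at h1
    have h2 : b x ≠ 0 := by
      intro h2
      apply hx
      rw [h1, h2]; ring
    have := key _ h2 i
    rw [Real.norm_eq_abs, abs_le]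
    constructor <;> nlinarith [this.1, this.2]

lemma mollDl_supp (hsupp : Function.support b ⊆ Set.univ.pi fun _ : Fin n => Set.Ioo (0:ℝ) 1)
    {m : ℤ} {x : Fin n → ℝ} (hx : mollDl n b m x ≠ 0) : ‖x‖ ≤ (2:ℝ)^(-m) := by
  unfold mollDl at hx
  have h1 : mollD n b (fun i => (2:ℝ)^m * x i) ≠ 0 := by
    intro h
    apply hx
    rw [h, mul_zero]
  have h2 := mollD_supp hsupp h1
  rw [fun_two_smul, norm_smul, Real.norm_eq_abs, abs_of_pos (zpow_pos two_pos m)] at h2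
  have h3 : (0:ℝ) < (2:ℝ)^m := zpow_pos two_pos m
  rw [zpow_neg]
  rw [← one_div, le_div_iff₀ h3]
  nlinarith [norm_nonneg x]
  
lemma integral_mollD (hsm : ContDiff ℝ (⊤ : ℕ∞) b) (hcs : HasCompactSupport b)
    (hint : (∫ x, b x) = 1) : (∫ x, mollD n b x) = 0 := by
  have hb_int : Integrable b := hsm.continuous.integrable_of_hasCompactSupport hcs
  have h2cs : HasCompactSupport (fun x : Fin n → ℝ => b ((2:ℝ) • x)) := by
    exact hcs.comp_isClosedEmbedding
      (Homeomorph.smulOfNeZero (2:ℝ) two_ne_zero).isClosedEmbedding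
  have h2int : Integrable (fun x : Fin n → ℝ => b ((2:ℝ) • x)) :=
    (hsm.continuous.comp (continuous_id.const_smul (2:ℝ))).integrable_of_hasCompactSupport h2cs
  have hscale : (∫ x : Fin n → ℝ, b ((2:ℝ) • x)) = ((2:ℝ)^n)⁻¹ * ∫ x, b x := by
    rw [MeasureTheory.Measure.integral_comp_smul volume b 2]
    rw [Module.finrank_fin_fun]
    rw [abs_of_nonneg (by positivity), smul_eq_mul]
  unfold mollD
  simp only [fun_two_smul]
  rw [integral_sub (h2int.const_mul _) hb_int, integral_const_mul, hscale, hint]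
  have h2n : ((2:ℝ)^n) ≠ 0 := by positivity
  field_simp
  norm_num

lemma integral_mollDl (hsm : ContDiff ℝ (⊤ : ℕ∞) b) (hcs : HasCompactSupport b)
    (hint : (∫ x, b x) = 1) (m : ℤ) : (∫ x, mollDl n b m x) = 0 := by
  unfold mollDl
  simp only [fun_two_smul]
  rw [integral_const_mul]
  rw [MeasureTheory.Measure.integral_comp_smul volume (mollD n b) ((2:ℝ)^m), integral_mollD hsm hcs hint]
  simp

end Aux4

/-- With the mollified Haar functions `f_{Q,l} = h_Q * d_{j+l}`
(`Q ∈ 𝒬_j`), for `l ≤ 0` there is a constant `C > 0` (depending only on `n` and `b`) such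
that `∫ f_{Q,l} = 0`, `supp f_{Q,l} ⊆ C 2^{|l|} Q` (a dilate of `Q`, expressed as the set of
points within distance `C 2^{|l|} sidelength(Q)` of the center of `Q`),
`|f_{Q,l}| ≤ C 2^{-|l|(n+1)}`, and `Lip(f_{Q,l}) ≤ C 2^{-|l|(n+2)} / diam Q`. -/
theorem stmt15 (n : ℕ) (hn : 1 ≤ n) (b : (Fin n → ℝ) → ℝ)
    (hsm : ContDiff ℝ (⊤ : ℕ∞) b) (hcs : HasCompactSupport b)
    (hsupp : Function.support b ⊆ Set.univ.pi fun _ : Fin n => Set.Ioo (0:ℝ) 1)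
    (hint : (∫ x, b x) = 1)
    (hmom : ∀ i : Fin n, ∀ x : Fin n → ℝ, (∫ s : ℝ, s * b (Function.update x i s)) = 0) :
    ∃ C : ℝ, 0 < C ∧
      ∀ (j : ℤ) (k : Fin n → ℤ) (ε : Fin n → Bool), ε ≠ (fun _ => false) →
        ∀ l : ℤ, l ≤ 0 →
          ((∫ x, mollHaar n b j k ε l x) = 0 ∧
           Function.support (mollHaar n b j k ε l) ⊆
             {x | dist x (cubeCenter n j k) ≤ C * (2:ℝ) ^ (-l) * (2:ℝ) ^ (-j)} ∧
           (∀ x, |mollHaar n b j k ε l x| ≤ C * (2:ℝ) ^ (l * ((n:ℤ) + 1))) ∧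
           (∀ x y, |mollHaar n b j k ε l x - mollHaar n b j k ε l y| ≤
              C * (2:ℝ) ^ (l * ((n:ℤ) + 2)) / Metric.diam (cubeSet n j k) * dist x y)) := by
  classical
  have hd_sm : ContDiff ℝ (⊤ : ℕ∞) (mollD n b) := mollD_contDiff hsm
  have hd_cs : HasCompactSupport (mollD n b) := mollD_hasCompactSupport hcs
  have hd_cont : Continuous (mollD n b) := hd_sm.continuous
  obtain ⟨B, hB⟩ := hd_cs.exists_bound_of_continuous hd_cont
  have hB0 : 0 ≤ B := le_trans (norm_nonneg _) (hB 0)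
  obtain ⟨K, hK⟩ := ContDiff.lipschitzWith_of_hasCompactSupport hd_cs hd_sm (by simp)
  have hd_diff : Differentiable ℝ (mollD n b) := hd_sm.differentiable (by simp)
  have hd'_cs : HasCompactSupport (fderiv ℝ (mollD n b)) := hd_cs.fderiv (𝕜 := ℝ)
  have hd'_sm : ContDiff ℝ (⊤ : ℕ∞) (fderiv ℝ (mollD n b)) := hd_sm.fderiv_right (by simp)
  obtain ⟨K2, hK2⟩ := ContDiff.lipschitzWith_of_hasCompactSupport hd'_cs hd'_sm (by simp)
  set C : ℝ := (K:ℝ) + (K2:ℝ) + B + 2 with hCdef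
  have hC0 : 0 < C := by positivity
  have hCK : (K:ℝ) ≤ C := by
    have := K2.coe_nonneg
    simp only [hCdef]; nlinarith [K2.coe_nonneg]
  have hCK2 : (K2:ℝ) ≤ C := by simp only [hCdef]; nlinarith [K.coe_nonneg]
  have hC2 : (2:ℝ) ≤ C := by simp only [hCdef]; nlinarith [K.coe_nonneg, K2.coe_nonneg]
  refine ⟨C, hC0, ?_⟩
  intro j k ε hε l hl
  obtain ⟨i₀, hi₀⟩ : ∃ i, ε i = true := by
    by_contra hcon
    push_neg at hcon
    exact hε (funext fun i => by simpa using hcon i)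
  set m : ℤ := j + l with hm
  set e : Fin n → ℝ := Pi.single i₀ ((2:ℝ)^(-(j+1))) with he
  have hnorme : ‖e‖ = (2:ℝ)^(-(j+1)) := by
    rw [he, Pi.norm_single, Real.norm_eq_abs, abs_of_pos (by positivity)]
  set bD : ℝ := (2:ℝ)^(m*(n:ℤ)) * B with hbD
  have hbD0 : 0 ≤ bD := by positivity
  have htwo : (2:ℝ) ≠ 0 := two_ne_zero
  -- scaled estimates on mollDl
  have hS1 : ∀ a : Fin n → ℝ, |mollDl n b m a| ≤ bD := by
    intro a
    unfold mollDl
    rw [abs_mul, abs_of_pos (zpow_pos two_pos _), hbD]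
    exact mul_le_mul_of_nonneg_left (by rw [← Real.norm_eq_abs]; exact hB _) (by positivity)
  have hS4 : ∀ a : Fin n → ℝ, mollDl n b m a ≠ 0 → ‖a‖ ≤ (2:ℝ)^(-m) :=
    fun a ha => mollDl_supp hsupp ha
  have hS2 : ∀ a a' : Fin n → ℝ,
      |mollDl n b m a - mollDl n b m a'| ≤ (2:ℝ)^(m*(n:ℤ)) * (2:ℝ)^m * (K:ℝ) * ‖a - a'‖ := by
    intro a a'
    unfold mollDl
    simp only [fun_two_smul]
    rw [← mul_sub, abs_mul, abs_of_pos (zpow_pos two_pos _)]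
    have h1 := hK.dist_le_mul ((2:ℝ)^m • a) ((2:ℝ)^m • a')
    rw [Real.dist_eq, dist_eq_norm, ← smul_sub, norm_smul, Real.norm_eq_abs,
      (show |(2:ℝ)^m| = (2:ℝ)^m from abs_of_pos (zpow_pos two_pos m))] at h1
    calc (2:ℝ)^(m*(n:ℤ)) * |mollD n b ((2:ℝ)^m • a) - mollD n b ((2:ℝ)^m • a')|
        ≤ (2:ℝ)^(m*(n:ℤ)) * ((K:ℝ) * ((2:ℝ)^m * ‖a - a'‖)) :=
          mul_le_mul_of_nonneg_left h1 (by positivity)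
      _ = (2:ℝ)^(m*(n:ℤ)) * (2:ℝ)^m * (K:ℝ) * ‖a - a'‖ := by ring
  have hS3 : ∀ u v h : Fin n → ℝ,
      |mollDl n b m u - mollDl n b m (u - h) - (mollDl n b m v - mollDl n b m (v - h))|
        ≤ (2:ℝ)^(m*(n:ℤ)) * (2:ℝ)^m * (2:ℝ)^m * (K2:ℝ) * ‖h‖ * ‖u - v‖ := by
    intro u v h
    have key := double_diff (mollD n b) hd_diff hK2 ((2:ℝ)^m • u) ((2:ℝ)^m • v) ((2:ℝ)^m • h)
    have hnorm1 : ‖(2:ℝ)^m • h‖ = (2:ℝ)^m * ‖h‖ := by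
      rw [norm_smul, Real.norm_eq_abs, abs_of_pos (zpow_pos two_pos m)]
    have hnorm2 : ‖(2:ℝ)^m • u - (2:ℝ)^m • v‖ = (2:ℝ)^m * ‖u - v‖ := by
      rw [← smul_sub, norm_smul, Real.norm_eq_abs, abs_of_pos (zpow_pos two_pos m)]
    rw [hnorm1, hnorm2] at key
    unfold mollDl
    simp only [fun_two_smul]
    have heq : (2:ℝ)^(m*(n:ℤ)) * mollD n b ((2:ℝ)^m • u)
        - (2:ℝ)^(m*(n:ℤ)) * mollD n b ((2:ℝ)^m • (u - h))
        - ((2:ℝ)^(m*(n:ℤ)) * mollD n b ((2:ℝ)^m • v)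
          - (2:ℝ)^(m*(n:ℤ)) * mollD n b ((2:ℝ)^m • (v - h)))
        = (2:ℝ)^(m*(n:ℤ)) * (mollD n b ((2:ℝ)^m • u) - mollD n b ((2:ℝ)^m • u - (2:ℝ)^m • h)
          - (mollD n b ((2:ℝ)^m • v) - mollD n b ((2:ℝ)^m • v - (2:ℝ)^m • h))) := by
      rw [smul_sub, smul_sub]; ring
    rw [heq, abs_mul, abs_of_pos (zpow_pos two_pos _)]
    calc (2:ℝ)^(m*(n:ℤ)) * |mollD n b ((2:ℝ)^m • u) - mollD n b ((2:ℝ)^m • u - (2:ℝ)^m • h)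
          - (mollD n b ((2:ℝ)^m • v) - mollD n b ((2:ℝ)^m • v - (2:ℝ)^m • h))|
        ≤ (2:ℝ)^(m*(n:ℤ)) * ((K2:ℝ) * ((2:ℝ)^m * ‖h‖) * ((2:ℝ)^m * ‖u - v‖)) :=
          mul_le_mul_of_nonneg_left key (by positivity)
      _ = (2:ℝ)^(m*(n:ℤ)) * (2:ℝ)^m * (2:ℝ)^m * (K2:ℝ) * ‖h‖ * ‖u - v‖ := by ring
  have hD_cont : Continuous (mollDl n b m) := by
    unfold mollDl
    simp only [fun_two_smul]
    apply Continuous.mul continuous_const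
    apply hd_cont.comp
    fun_prop
  -- generic integrability
  have intH : ∀ (s : Set (Fin n → ℝ)), MeasurableSet s → volume s ≠ ⊤ →
      ∀ (H ψ : (Fin n → ℝ) → ℝ), Measurable H → Measurable ψ →
      (∀ z, |H z| ≤ s.indicator 1 z) → ∀ (c : ℝ), (∀ a, |ψ a| ≤ c) →
      Integrable (fun z => H z * ψ z) := by
    intro s hs hv H ψ hH hψ hHle c hψle
    have hc0 : 0 ≤ c := le_trans (abs_nonneg _) (hψle 0)
    apply integrable_of_le_indicator (c := c) ((hH.mul hψ).aestronglyMeasurable) hs hv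
    intro z
    rw [Real.norm_eq_abs, Pi.mul_apply, abs_mul]
    by_cases hz : z ∈ s
    · rw [Set.indicator_of_mem hz]
      have h1 : |H z| ≤ 1 := by
        have := hHle z; rwa [Set.indicator_of_mem hz, Pi.one_apply] at this
      calc |H z| * |ψ z| ≤ 1 * c := mul_le_mul h1 (hψle z) (abs_nonneg _) one_pos.le
        _ = c := one_mul _
    · rw [Set.indicator_of_notMem hz]
      have h1 : |H z| ≤ 0 := by
        have := hHle z; rwa [Set.indicator_of_notMem hz] at this
      have h2 : |H z| = 0 := le_antisymm h1 (abs_nonneg _)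
      rw [h2, zero_mul]
  have hvol_cube : volume (cubeSet n j k) ≠ ⊤ := by
    rw [volume_cubeSet]; exact ENNReal.ofReal_ne_top
  have hvol_toReal : (volume (cubeSet n j k)).toReal = (2:ℝ)^(-j*(n:ℤ)) := by
    rw [volume_cubeSet, ENNReal.toReal_ofReal (by positivity)]
  -- translated cube
  set s' : Set (Fin n → ℝ) := (fun z => z - e) ⁻¹' (cubeSet n j k) with hs'
  have hs'meas : MeasurableSet s' := (measurableSet_cubeSet n j k).preimage (measurable_id.sub_const e)
  have hs'vol : volume s' ≠ ⊤ := by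
    have h := measure_preimage_add_right (volume : Measure (Fin n → ℝ)) (-e) (cubeSet n j k)
    rw [hs', show (fun z : Fin n → ℝ => z - e) = (fun z => z + (-e))
      by funext z; rw [sub_eq_add_neg], h]
    exact hvol_cube
  have hgle : ∀ z, |gAux n j k ε i₀ z| ≤ (cubeSet n j k).indicator 1 z :=
    abs_gAux_le n j k ε i₀
  have hgle' : ∀ z, |gAux n j k ε i₀ (z - e)| ≤ s'.indicator 1 z := by
    intro z
    by_cases hz : z ∈ s'
    · rw [Set.indicator_of_mem hz]
      have h2 := hgle (z - e)
      rwa [Set.indicator_of_mem (by exact hz)] at h2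
    · rw [Set.indicator_of_notMem hz]
      have h2 := hgle (z - e)
      rwa [Set.indicator_of_notMem (by exact hz)] at h2
  have hmg : Measurable (gAux n j k ε i₀) := measurable_gAux n j k ε i₀
  have hmH : Measurable (haarCube n j k ε) := measurable_haarCube n j k ε
  have hHle : ∀ z, |haarCube n j k ε z| ≤ (cubeSet n j k).indicator 1 z :=
    abs_haarCube_le n j k ε
  -- representation
  have hrep : ∀ x, mollHaar n b j k ε l x
      = ∫ z, gAux n j k ε i₀ z * (mollDl n b m (x - z) - mollDl n b m (x - z - e)) := by
    intro x
    have hψ1 : Measurable (fun z : Fin n → ℝ => mollDl n b m (x - z)) :=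
      hD_cont.measurable.comp (measurable_const.sub measurable_id)
    have hψ2 : Measurable (fun z : Fin n → ℝ => mollDl n b m (x - z - e)) :=
      hD_cont.measurable.comp ((measurable_const.sub measurable_id).sub_const e)
    have intA : Integrable (fun z => gAux n j k ε i₀ z * mollDl n b m (x - z)) :=
      intH _ (measurableSet_cubeSet n j k) hvol_cube _ _ hmg hψ1 hgle bD (fun a => hS1 _)
    have intB : Integrable (fun z => gAux n j k ε i₀ (z - e) * mollDl n b m (x - z)) :=
      intH s' hs'meas hs'vol _ _ (hmg.comp (measurable_id.sub_const e)) hψ1 hgle' bD (fun a => hS1 _)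
    have intC : Integrable (fun z => gAux n j k ε i₀ z * mollDl n b m (x - z - e)) :=
      intH _ (measurableSet_cubeSet n j k) hvol_cube _ _ hmg hψ2 hgle bD (fun a => hS1 _)
    have htrans : (∫ z, gAux n j k ε i₀ (z - e) * mollDl n b m (x - z))
        = ∫ z, gAux n j k ε i₀ z * mollDl n b m (x - z - e) := by
      have h0 := integral_sub_right_eq_self (μ := (volume : Measure (Fin n → ℝ)))
        (fun w => gAux n j k ε i₀ w * mollDl n b m (x - e - w)) e
      calc (∫ z, gAux n j k ε i₀ (z - e) * mollDl n b m (x - z))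
          = ∫ z, gAux n j k ε i₀ (z - e) * mollDl n b m (x - e - (z - e)) := by
            congr 1; funext z; rw [sub_sub_sub_cancel_right]
        _ = ∫ w, gAux n j k ε i₀ w * mollDl n b m (x - e - w) := h0
        _ = ∫ z, gAux n j k ε i₀ z * mollDl n b m (x - z - e) := by
            congr 1; funext z; rw [sub_right_comm]
    calc mollHaar n b j k ε l x
        = ∫ z, haarCube n j k ε z * mollDl n b m (x - z) := by
          unfold mollHaar; rw [← hm]
      _ = ∫ z, (gAux n j k ε i₀ z * mollDl n b m (x - z)
            - gAux n j k ε i₀ (z - e) * mollDl n b m (x - z)) := by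
          congr 1; funext z
          rw [haarCube_decomp n j k ε i₀ hi₀ z, ← he, sub_mul]
      _ = (∫ z, gAux n j k ε i₀ z * mollDl n b m (x - z))
            - ∫ z, gAux n j k ε i₀ (z - e) * mollDl n b m (x - z) := integral_sub intA intB
      _ = (∫ z, gAux n j k ε i₀ z * mollDl n b m (x - z))
            - ∫ z, gAux n j k ε i₀ z * mollDl n b m (x - z - e) := by rw [htrans]
      _ = ∫ z, (gAux n j k ε i₀ z * mollDl n b m (x - z)
            - gAux n j k ε i₀ z * mollDl n b m (x - z - e)) := (integral_sub intA intC).symm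
      _ = ∫ z, gAux n j k ε i₀ z * (mollDl n b m (x - z) - mollDl n b m (x - z - e)) := by
          congr 1; funext z; ring
  have hcomb : ∀ a c : ℤ, (2:ℝ)^a * (2:ℝ)^c = (2:ℝ)^(a+c) :=
    fun a c => (zpow_add₀ htwo a c).symm
  have habs2 : ∀ a a' : Fin n → ℝ, |mollDl n b m a - mollDl n b m a'| ≤ 2 * bD := by
    intro a a'
    rw [sub_eq_add_neg]
    refine (abs_add_le _ _).trans ?_
    rw [abs_neg]
    linarith [hS1 a, hS1 a']
  refine ⟨?_, ?_, ?_, ?_⟩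
  · -- integral zero
    have hF : Integrable (Function.uncurry fun (x y : Fin n → ℝ) =>
        haarCube n j k ε y * mollDl n b m (x - y))
        ((volume : Measure (Fin n → ℝ)).prod volume) := by
      apply integrable_of_le_indicator (c := bD)
        (s := (Metric.closedBall (cubeCenter n j k) ((2:ℝ)^(-m) + (2:ℝ)^(-j)))
          ×ˢ (Metric.closedBall (cubeCenter n j k) ((2:ℝ)^(-j))))
      · exact (((measurable_haarCube n j k ε).comp measurable_snd).mul
          (hD_cont.measurable.comp (measurable_fst.sub measurable_snd))).aestronglyMeasurable
      · exact measurableSet_closedBall.prod measurableSet_closedBall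
      · rw [Measure.prod_prod]
        exact ENNReal.mul_ne_top ((isCompact_closedBall _ _).measure_lt_top).ne
          ((isCompact_closedBall _ _).measure_lt_top).ne
      · rintro ⟨x, y⟩
        rw [Function.uncurry_apply_pair, Real.norm_eq_abs, abs_mul]
        by_cases hp : (x, y) ∈ (Metric.closedBall (cubeCenter n j k) ((2:ℝ)^(-m) + (2:ℝ)^(-j)))
            ×ˢ (Metric.closedBall (cubeCenter n j k) ((2:ℝ)^(-j)))
        · rw [Set.indicator_of_mem hp]
          have h1 : |haarCube n j k ε y| ≤ 1 := by
            have h2 := hHle y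
            by_cases hy : y ∈ cubeSet n j k
            · rwa [Set.indicator_of_mem hy, Pi.one_apply] at h2
            · rw [Set.indicator_of_notMem hy] at h2
              linarith [abs_nonneg (haarCube n j k ε y)]
          calc |haarCube n j k ε y| * |mollDl n b m (x - y)| ≤ 1 * bD :=
              mul_le_mul h1 (hS1 _) (abs_nonneg _) one_pos.le
            _ = bD := one_mul _
        · rw [Set.indicator_of_notMem hp]
          rw [Set.mem_prod] at hp
          push_neg at hp
          by_cases hy : y ∈ cubeSet n j k
          · have hy1 : y ∈ Metric.closedBall (cubeCenter n j k) ((2:ℝ)^(-j)) :=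
              Metric.mem_closedBall.2 (cubeSet_subset_ball n j k hy)
            have hxB2 : x ∉ Metric.closedBall (cubeCenter n j k) ((2:ℝ)^(-m) + (2:ℝ)^(-j)) :=
              fun hx => hp hx hy1
            have hD0 : mollDl n b m (x - y) = 0 := by
              by_contra hD
              apply hxB2
              rw [Metric.mem_closedBall]
              have h3 : dist x y ≤ (2:ℝ)^(-m) := by
                rw [dist_eq_norm]; exact hS4 _ hD
              calc dist x (cubeCenter n j k) ≤ dist x y + dist y (cubeCenter n j k) :=
                  dist_triangle _ _ _
                _ ≤ (2:ℝ)^(-m) + (2:ℝ)^(-j) :=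
                  add_le_add h3 (Metric.mem_closedBall.1 hy1)
            rw [hD0, abs_zero, mul_zero]
          · have h2 : |haarCube n j k ε y| ≤ 0 := by
              have := hHle y; rwa [Set.indicator_of_notMem hy] at this
            rw [le_antisymm h2 (abs_nonneg _), zero_mul]
    unfold mollHaar
    rw [← hm]
    rw [integral_integral_swap hF]
    have hz : ∀ y, (∫ x, haarCube n j k ε y * mollDl n b m (x - y)) = 0 := by
      intro y
      rw [integral_const_mul,
        integral_sub_right_eq_self (μ := (volume : Measure (Fin n → ℝ))) (mollDl n b m) y,
        integral_mollDl hsm hcs hint m, mul_zero]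
    simp only [hz]
    exact integral_zero _ _
  · -- support
    intro x hx
    rw [Function.mem_support] at hx
    rw [Set.mem_setOf_eq]
    by_contra hgt
    push_neg at hgt
    apply hx
    have h2ml : (2:ℝ)^(-m) = (2:ℝ)^(-l) * (2:ℝ)^(-j) := by
      rw [hcomb]; congr 1; rw [hm]; ring
    have h1l : (1:ℝ) ≤ (2:ℝ)^(-l) := by
      calc (1:ℝ) = (2:ℝ)^(0:ℤ) := (zpow_zero 2).symm
        _ ≤ (2:ℝ)^(-l) := zpow_le_zpow_right₀ one_le_two (by omega)
    have hz : ∀ z, haarCube n j k ε z * mollDl n b m (x - z) = 0 := by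
      intro z
      by_cases hzc : z ∈ cubeSet n j k
      · have hD0 : mollDl n b m (x - z) = 0 := by
          by_contra hD
          have h3 : dist x z ≤ (2:ℝ)^(-m) := by
            rw [dist_eq_norm]; exact hS4 _ hD
          have h4 : dist z (cubeCenter n j k) ≤ (2:ℝ)^(-j) := cubeSet_subset_ball n j k hzc
          have h5 : dist x (cubeCenter n j k) ≤ (2:ℝ)^(-l) * (2:ℝ)^(-j) + (2:ℝ)^(-j) := by
            calc dist x (cubeCenter n j k) ≤ dist x z + dist z (cubeCenter n j k) :=
                dist_triangle _ _ _
              _ ≤ (2:ℝ)^(-m) + (2:ℝ)^(-j) := add_le_add h3 h4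
              _ = (2:ℝ)^(-l) * (2:ℝ)^(-j) + (2:ℝ)^(-j) := by rw [h2ml]
          have h6 : (0:ℝ) < (2:ℝ)^(-j) := zpow_pos two_pos _
          have h7 : (0:ℝ) < (2:ℝ)^(-l) := zpow_pos two_pos _
          nlinarith [hgt, h5, h6, h7, h1l, hC2,
            mul_le_mul_of_nonneg_right hC2 (mul_pos h7 h6).le,
            mul_le_mul_of_nonneg_right h1l h6.le]
        rw [hD0, mul_zero]
      · have h2 : |haarCube n j k ε z| ≤ 0 := by
          have := hHle z; rwa [Set.indicator_of_notMem hzc] at this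
        rw [abs_eq_zero.1 (le_antisymm h2 (abs_nonneg _)), zero_mul]
    unfold mollHaar
    rw [← hm]
    simp only [hz]
    exact integral_zero _ _
  · -- sup bound
    intro x
    rw [hrep x]
    set c₁ : ℝ := (2:ℝ)^(m*(n:ℤ)) * (2:ℝ)^m * (K:ℝ) * ‖e‖ with hc₁
    have hc₁0 : 0 ≤ c₁ := by
      rw [hc₁]; positivity
    have hbound : ∀ z, ‖gAux n j k ε i₀ z * (mollDl n b m (x - z) - mollDl n b m (x - z - e))‖
        ≤ (cubeSet n j k).indicator (fun _ => c₁) z := by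
      intro z
      rw [Real.norm_eq_abs, abs_mul]
      by_cases hz : z ∈ cubeSet n j k
      · rw [Set.indicator_of_mem hz]
        have h1 : |gAux n j k ε i₀ z| ≤ 1 := by
          have := hgle z; rwa [Set.indicator_of_mem hz, Pi.one_apply] at this
        have h2 : |mollDl n b m (x - z) - mollDl n b m (x - z - e)| ≤ c₁ := by
          have h3 := hS2 (x - z) (x - z - e)
          rwa [sub_sub_cancel] at h3
        calc |gAux n j k ε i₀ z| * |mollDl n b m (x - z) - mollDl n b m (x - z - e)|
            ≤ 1 * c₁ := mul_le_mul h1 h2 (abs_nonneg _) one_pos.le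
          _ = c₁ := one_mul _
      · rw [Set.indicator_of_notMem hz]
        have h1 : |gAux n j k ε i₀ z| ≤ 0 := by
          have := hgle z; rwa [Set.indicator_of_notMem hz] at this
        rw [le_antisymm h1 (abs_nonneg _), zero_mul]
    have hintind : Integrable ((cubeSet n j k).indicator (fun _ => c₁)) :=
      (integrable_indicator_iff (measurableSet_cubeSet n j k)).2
        (integrableOn_const hvol_cube)
    have h5 := norm_integral_le_of_norm_le hintind (Filter.Eventually.of_forall hbound)
    rw [Real.norm_eq_abs] at h5
    rw [integral_indicator_const _ (measurableSet_cubeSet n j k), smul_eq_mul, measureReal_def, hvol_toReal] at h5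
    refine h5.trans ?_
    rw [hc₁, hnorme]
    have hKe : (2:ℝ)^(-j*(n:ℤ)) * ((2:ℝ)^(m*(n:ℤ)) * (2:ℝ)^m * (K:ℝ) * (2:ℝ)^(-(j+1)))
        = (K:ℝ) * (2:ℝ)^(l*((n:ℤ)+1) - 1) := by
      rw [show (2:ℝ)^(-j*(n:ℤ)) * ((2:ℝ)^(m*(n:ℤ)) * (2:ℝ)^m * (K:ℝ) * (2:ℝ)^(-(j+1)))
          = (K:ℝ) * ((2:ℝ)^(-j*(n:ℤ)) * (2:ℝ)^(m*(n:ℤ)) * (2:ℝ)^m * (2:ℝ)^(-(j+1))) from by ring,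
        hcomb, hcomb, hcomb]
      congr 1
      rw [hm]; ring
    rw [hKe]
    have h6 : (2:ℝ)^(l*((n:ℤ)+1) - 1) ≤ (2:ℝ)^(l*((n:ℤ)+1)) :=
      zpow_le_zpow_right₀ one_le_two (by omega)
    calc (K:ℝ) * (2:ℝ)^(l*((n:ℤ)+1) - 1)
        ≤ C * (2:ℝ)^(l*((n:ℤ)+1) - 1) :=
          mul_le_mul_of_nonneg_right hCK (zpow_pos two_pos _).le
      _ ≤ C * (2:ℝ)^(l*((n:ℤ)+1)) := mul_le_mul_of_nonneg_left h6 hC0.le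
  · -- Lipschitz
    intro x y
    rw [hrep x, hrep y]
    have hψ : ∀ w : Fin n → ℝ, Measurable (fun z : Fin n → ℝ =>
        mollDl n b m (w - z) - mollDl n b m (w - z - e)) := fun w =>
      (hD_cont.measurable.comp (measurable_const.sub measurable_id)).sub
        (hD_cont.measurable.comp ((measurable_const.sub measurable_id).sub_const e))
    have intX : Integrable (fun z => gAux n j k ε i₀ z *
        (mollDl n b m (x - z) - mollDl n b m (x - z - e))) :=
      intH _ (measurableSet_cubeSet n j k) hvol_cube _ _ hmg (hψ x) hgle (2*bD)
        (fun a => habs2 _ _)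
    have intY : Integrable (fun z => gAux n j k ε i₀ z *
        (mollDl n b m (y - z) - mollDl n b m (y - z - e))) :=
      intH _ (measurableSet_cubeSet n j k) hvol_cube _ _ hmg (hψ y) hgle (2*bD)
        (fun a => habs2 _ _)
    rw [← integral_sub intX intY]
    rw [show (fun z => gAux n j k ε i₀ z * (mollDl n b m (x - z) - mollDl n b m (x - z - e))
          - gAux n j k ε i₀ z * (mollDl n b m (y - z) - mollDl n b m (y - z - e)))
        = fun z => gAux n j k ε i₀ z * ((mollDl n b m (x - z) - mollDl n b m (x - z - e))
          - (mollDl n b m (y - z) - mollDl n b m (y - z - e))) from by funext z; ring]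
    set c₂ : ℝ := (2:ℝ)^(m*(n:ℤ)) * (2:ℝ)^m * (2:ℝ)^m * (K2:ℝ) * ‖e‖ * ‖x - y‖ with hc₂
    have hc₂0 : 0 ≤ c₂ := by rw [hc₂]; positivity
    have hbound : ∀ z, ‖gAux n j k ε i₀ z * ((mollDl n b m (x - z) - mollDl n b m (x - z - e))
        - (mollDl n b m (y - z) - mollDl n b m (y - z - e)))‖
        ≤ (cubeSet n j k).indicator (fun _ => c₂) z := by
      intro z
      rw [Real.norm_eq_abs, abs_mul]
      by_cases hz : z ∈ cubeSet n j k
      · rw [Set.indicator_of_mem hz]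
        have h1 : |gAux n j k ε i₀ z| ≤ 1 := by
          have := hgle z; rwa [Set.indicator_of_mem hz, Pi.one_apply] at this
        have h2 : |(mollDl n b m (x - z) - mollDl n b m (x - z - e))
            - (mollDl n b m (y - z) - mollDl n b m (y - z - e))| ≤ c₂ := by
          have h3 := hS3 (x - z) (y - z) e
          rwa [sub_sub_sub_cancel_right] at h3
        calc |gAux n j k ε i₀ z| * |(mollDl n b m (x - z) - mollDl n b m (x - z - e))
              - (mollDl n b m (y - z) - mollDl n b m (y - z - e))|
            ≤ 1 * c₂ := mul_le_mul h1 h2 (abs_nonneg _) one_pos.le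
          _ = c₂ := one_mul _
      · rw [Set.indicator_of_notMem hz]
        have h1 : |gAux n j k ε i₀ z| ≤ 0 := by
          have := hgle z; rwa [Set.indicator_of_notMem hz] at this
        rw [le_antisymm h1 (abs_nonneg _), zero_mul]
    have hintind : Integrable ((cubeSet n j k).indicator (fun _ => c₂)) :=
      (integrable_indicator_iff (measurableSet_cubeSet n j k)).2
        (integrableOn_const hvol_cube)
    have h5 := norm_integral_le_of_norm_le hintind (Filter.Eventually.of_forall hbound)
    rw [Real.norm_eq_abs] at h5
    rw [integral_indicator_const _ (measurableSet_cubeSet n j k), smul_eq_mul, measureReal_def, hvol_toReal] at h5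
    refine h5.trans ?_
    rw [hc₂, hnorme]
    have hKe : (2:ℝ)^(-j*(n:ℤ)) * ((2:ℝ)^(m*(n:ℤ)) * (2:ℝ)^m * (2:ℝ)^m * (K2:ℝ) * (2:ℝ)^(-(j+1))
          * ‖x - y‖)
        = ((K2:ℝ) * (2:ℝ)^(l*((n:ℤ)+2) + j - 1)) * ‖x - y‖ := by
      rw [show (2:ℝ)^(-j*(n:ℤ)) * ((2:ℝ)^(m*(n:ℤ)) * (2:ℝ)^m * (2:ℝ)^m * (K2:ℝ)
            * (2:ℝ)^(-(j+1)) * ‖x - y‖)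
          = ((K2:ℝ) * ((2:ℝ)^(-j*(n:ℤ)) * (2:ℝ)^(m*(n:ℤ)) * (2:ℝ)^m * (2:ℝ)^m
            * (2:ℝ)^(-(j+1)))) * ‖x - y‖ from by ring,
        hcomb, hcomb, hcomb, hcomb]
      congr 3
      rw [hm]; ring
    rw [hKe]
    set dQ : ℝ := Metric.diam (cubeSet n j k) with hdQ
    have hdle : dQ ≤ (2:ℝ)^(-j) := diam_cubeSet_le n j k
    have hdpos : 0 < dQ := diam_cubeSet_pos n hn j k
    have hA : (0:ℝ) < (2:ℝ)^(l*((n:ℤ)+2)) := zpow_pos two_pos _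
    have hstep1 : (K2:ℝ) * (2:ℝ)^(l*((n:ℤ)+2) + j - 1)
        ≤ C * ((2:ℝ)^(l*((n:ℤ)+2)) * (2:ℝ)^j) := by
      have h6 : (2:ℝ)^(l*((n:ℤ)+2) + j - 1) ≤ (2:ℝ)^(l*((n:ℤ)+2) + j) :=
        zpow_le_zpow_right₀ one_le_two (by omega)
      have h7 : (2:ℝ)^(l*((n:ℤ)+2) + j) = (2:ℝ)^(l*((n:ℤ)+2)) * (2:ℝ)^j := by
        rw [hcomb]
      rw [← h7]
      calc (K2:ℝ) * (2:ℝ)^(l*((n:ℤ)+2) + j - 1)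
          ≤ C * (2:ℝ)^(l*((n:ℤ)+2) + j - 1) :=
            mul_le_mul_of_nonneg_right hCK2 (zpow_pos two_pos _).le
        _ ≤ C * (2:ℝ)^(l*((n:ℤ)+2) + j) := mul_le_mul_of_nonneg_left h6 hC0.le
    have hstep2 : C * ((2:ℝ)^(l*((n:ℤ)+2)) * (2:ℝ)^j)
        ≤ C * (2:ℝ)^(l*((n:ℤ)+2)) / dQ := by
      rw [le_div_iff₀ hdpos]
      have h8 : (2:ℝ)^j * dQ ≤ 1 := by
        have h9 : (2:ℝ)^j * (2:ℝ)^(-j) = 1 := by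
          rw [hcomb]; simp
        calc (2:ℝ)^j * dQ ≤ (2:ℝ)^j * (2:ℝ)^(-j) :=
            mul_le_mul_of_nonneg_left hdle (zpow_pos two_pos j).le
          _ = 1 := h9
      have h10 := mul_le_mul_of_nonneg_left h8
        (mul_nonneg hC0.le hA.le)
      calc C * ((2:ℝ)^(l*((n:ℤ)+2)) * (2:ℝ)^j) * dQ
          = C * (2:ℝ)^(l*((n:ℤ)+2)) * ((2:ℝ)^j * dQ) := by ring
        _ ≤ C * (2:ℝ)^(l*((n:ℤ)+2)) * 1 := h10
        _ = C * (2:ℝ)^(l*((n:ℤ)+2)) := mul_one _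
    rw [dist_eq_norm]
    exact mul_le_mul_of_nonneg_right (hstep1.trans hstep2) (norm_nonneg _)
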